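/- Let R be a commutative integral domain with fraction field K, P ∈ K^{n×m}, d ∈ R nonzero, P₀ = d⁻¹P, and suppose C₀ ∈ K^{m×n} stabilizes P₀ and there exist A ∈ R^{n×n}, B ∈ R^{m×n} with I = dA + PB. Then C = d⁻¹C₀ stabilizes P; in particular C(I-PC)⁻¹ = C₀(I-P₀C₀)⁻¹A + C₀(I-P₀C₀)⁻¹P₀B has entries in R. -/

import Mathlib

open Matrix

/-- A matrix over the fraction field is *stable* if all its entries lie in `R`. -/
def MatStable (R : Type*) [CommRing R] [IsDomain R] {α β : Type*}
    (M : Matrix α β (FractionRing R)) : Prop :=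
  ∀ i j, ∃ r : R, algebraMap R (FractionRing R) r = M i j

/-- `C` stabilizes `P`: the four closed-loop transfer matrices are stable. -/
def Stabilizes (R : Type*) [CommRing R] [IsDomain R] {n m : ℕ}
    (P : Matrix (Fin n) (Fin m) (FractionRing R))
    (C : Matrix (Fin m) (Fin n) (FractionRing R)) : Prop :=
  (1 - P * C).det ≠ 0 ∧ (1 - C * P).det ≠ 0 ∧
    MatStable R (1 - P * C)⁻¹ ∧ MatStable R ((1 - P * C)⁻¹ * P) ∧
    MatStable R (C * (1 - P * C)⁻¹) ∧ MatStable R (1 - C * P)⁻¹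

/-! Since `P * C = P₀ * C₀` and `C * P = C₀ * P₀`, three of the four closed-loop matrices are
unchanged and `(1 - P * C)⁻¹ * P` is `d` times its stable counterpart. For the remaining one,
multiply `X = C₀ * (1 - P₀ * C₀)⁻¹` on the right by `1 = d • A + P * B`: this gives
`C * (1 - P * C)⁻¹ = d⁻¹ • X = X * A + X * P₀ * B`, and the push-through identity
`X * P₀ = (1 - C₀ * P₀)⁻¹ - 1` shows both terms are stable. -/

section MatStable

variable {R : Type*} [CommRing R] [IsDomain R] {α β γ : Type*}

lemma matStable_iff (M : Matrix α β (FractionRing R)) :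
    MatStable R M ↔ ∃ M' : Matrix α β R, M'.map (algebraMap R (FractionRing R)) = M := by
  refine ⟨fun h ↦ ⟨.of fun i j ↦ (h i j).choose, ext fun i j ↦ (h i j).choose_spec⟩, ?_⟩
  rintro ⟨M', rfl⟩ i j
  exact ⟨M' i j, rfl⟩

lemma MatStable.map (M : Matrix α β R) : MatStable R (M.map (algebraMap R (FractionRing R))) :=
  (matStable_iff _).2 ⟨M, rfl⟩

lemma MatStable.one [DecidableEq α] : MatStable R (1 : Matrix α α (FractionRing R)) := by
  simpa using MatStable.map (R := R) (1 : Matrix α α R)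

lemma MatStable.add {M N : Matrix α β (FractionRing R)} (hM : MatStable R M)
    (hN : MatStable R N) : MatStable R (M + N) := fun i j ↦ by
  obtain ⟨r, hr⟩ := hM i j
  obtain ⟨s, hs⟩ := hN i j
  exact ⟨r + s, by simp [hr, hs]⟩

lemma MatStable.sub {M N : Matrix α β (FractionRing R)} (hM : MatStable R M)
    (hN : MatStable R N) : MatStable R (M - N) := fun i j ↦ by
  obtain ⟨r, hr⟩ := hM i j
  obtain ⟨s, hs⟩ := hN i j
  exact ⟨r - s, by simp [hr, hs]⟩

lemma MatStable.smul {M : Matrix α β (FractionRing R)} (hM : MatStable R M) (r : R) :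
    MatStable R (algebraMap R (FractionRing R) r • M) := fun i j ↦ by
  obtain ⟨s, hs⟩ := hM i j
  exact ⟨r * s, by simp [hs]⟩

lemma MatStable.mul [Fintype β] {M : Matrix α β (FractionRing R)}
    {N : Matrix β γ (FractionRing R)} (hM : MatStable R M) (hN : MatStable R N) :
    MatStable R (M * N) := by
  obtain ⟨M', rfl⟩ := (matStable_iff M).1 hM
  obtain ⟨N', rfl⟩ := (matStable_iff N).1 hN
  simpa only [Matrix.map_mul] using MatStable.map (M' * N')

end MatStable

section PushThrough

variable {α : Type*} [CommRing α] {m n : Type*} [Fintype m] [Fintype n] [DecidableEq m]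
  [DecidableEq n]

lemma mul_inv_one_sub_mul_comm (P : Matrix m n α) (C : Matrix n m α)
    (h : IsUnit (1 - P * C).det) : C * (1 - P * C)⁻¹ = (1 - C * P)⁻¹ * C := by
  have h' : IsUnit (1 - C * P).det := by rwa [det_one_sub_mul_comm]
  have hcomm : (1 - C * P) * C = C * (1 - P * C) := by
    simp only [Matrix.sub_mul, Matrix.mul_sub, Matrix.one_mul, Matrix.mul_one, Matrix.mul_assoc]
  calc C * (1 - P * C)⁻¹ = (1 - C * P)⁻¹ * ((1 - C * P) * C) * (1 - P * C)⁻¹ := by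
        rw [← Matrix.mul_assoc, nonsing_inv_mul _ h', Matrix.one_mul]
    _ = (1 - C * P)⁻¹ * C := by
        rw [hcomm, Matrix.mul_assoc, Matrix.mul_assoc, mul_nonsing_inv _ h, Matrix.mul_one]

lemma mul_inv_one_sub_mul_mul (P : Matrix m n α) (C : Matrix n m α)
    (h : IsUnit (1 - P * C).det) : C * (1 - P * C)⁻¹ * P = (1 - C * P)⁻¹ - 1 := by
  have h' : IsUnit (1 - C * P).det := by rwa [det_one_sub_mul_comm]
  calc C * (1 - P * C)⁻¹ * P = (1 - C * P)⁻¹ * (1 - (1 - C * P)) := by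
        rw [mul_inv_one_sub_mul_comm P C h, sub_sub_cancel, Matrix.mul_assoc]
    _ = (1 - C * P)⁻¹ - 1 := by rw [Matrix.mul_sub, Matrix.mul_one, nonsing_inv_mul _ h']

end PushThrough

section Rescaling

variable {K : Type*} [Field K] {m n : Type*} {c : K}

lemma smul_mul_inv_smul [Fintype m] (hc : c ≠ 0) (P : Matrix n m K) (C : Matrix m n K) :
    (c • P) * (c⁻¹ • C) = P * C := by
  rw [Matrix.smul_mul, Matrix.mul_smul, smul_smul, mul_inv_cancel₀ hc, one_smul]

lemma inv_smul_mul_smul [Fintype n] (hc : c ≠ 0) (P : Matrix n m K) (C : Matrix m n K) :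
    (c⁻¹ • C) * (c • P) = C * P := by
  rw [Matrix.smul_mul, Matrix.mul_smul, smul_smul, inv_mul_cancel₀ hc, one_smul]

lemma inv_smul_mul_inv_one_sub_of_one_eq [Fintype m] [Fintype n] [DecidableEq n] (hc : c ≠ 0)
    (P : Matrix n m K) (C : Matrix m n K) {A : Matrix n n K} {B : Matrix m n K}
    (hAB : 1 = c • A + (c • P) * B) :
    (c⁻¹ • C) * (1 - (c • P) * (c⁻¹ • C))⁻¹ =
      C * (1 - P * C)⁻¹ * A + C * (1 - P * C)⁻¹ * P * B := by
  have hX : C * (1 - P * C)⁻¹ =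
      c • (C * (1 - P * C)⁻¹ * A + C * (1 - P * C)⁻¹ * P * B) := by
    calc C * (1 - P * C)⁻¹ = C * (1 - P * C)⁻¹ * (c • A + (c • P) * B) := by
          rw [← hAB, Matrix.mul_one]
      _ = c • (C * (1 - P * C)⁻¹ * A + C * (1 - P * C)⁻¹ * P * B) := by
          rw [Matrix.mul_add, Matrix.smul_mul, Matrix.mul_smul, Matrix.mul_smul, smul_add,
            Matrix.mul_assoc _ P]
  rw [smul_mul_inv_smul hc, Matrix.smul_mul]
  conv_lhs => rw [hX]
  rw [smul_smul, inv_mul_cancel₀ hc, one_smul]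

end Rescaling

lemma Stabilizes.smul_inv_smul {R : Type*} [CommRing R] [IsDomain R] {n m : ℕ}
    {P₀ : Matrix (Fin n) (Fin m) (FractionRing R)} {C₀ : Matrix (Fin m) (Fin n) (FractionRing R)}
    {d : R} (hd : d ≠ 0) (hstab : Stabilizes R P₀ C₀)
    (hC : MatStable R ((algebraMap R (FractionRing R) d)⁻¹ • C₀ *
      (1 - algebraMap R (FractionRing R) d • P₀ * (algebraMap R (FractionRing R) d)⁻¹ • C₀)⁻¹)) :
    Stabilizes R (algebraMap R (FractionRing R) d • P₀)
      ((algebraMap R (FractionRing R) d)⁻¹ • C₀) := by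
  have hδ : algebraMap R (FractionRing R) d ≠ 0 :=
    (map_ne_zero_iff _ (IsFractionRing.injective R (FractionRing R))).2 hd
  obtain ⟨hdet, hdet', hS, hSP, -, hS'⟩ := hstab
  refine ⟨?_, ?_, ?_, ?_, hC, ?_⟩ <;>
    simp only [smul_mul_inv_smul hδ, inv_smul_mul_smul hδ, Matrix.mul_smul]
  exacts [hdet, hdet', hS, hSP.smul d, hS']

theorem stmt16 (R : Type*) [CommRing R] [IsDomain R] (n m : ℕ)
    (P : Matrix (Fin n) (Fin m) (FractionRing R)) (d : R) (hd : d ≠ 0)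
    (C₀ : Matrix (Fin m) (Fin n) (FractionRing R))
    (P₀ : Matrix (Fin n) (Fin m) (FractionRing R))
    (hP₀ : P₀ = (algebraMap R (FractionRing R) d)⁻¹ • P)
    (hstab : Stabilizes R P₀ C₀)
    (A : Matrix (Fin n) (Fin n) R) (B : Matrix (Fin m) (Fin n) R)
    (h : (1 : Matrix (Fin n) (Fin n) (FractionRing R)) =
      algebraMap R (FractionRing R) d • A.map (algebraMap R (FractionRing R)) +
        P * B.map (algebraMap R (FractionRing R))) :
    Stabilizes R P ((algebraMap R (FractionRing R) d)⁻¹ • C₀) ∧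
      ((algebraMap R (FractionRing R) d)⁻¹ • C₀) *
          (1 - P * ((algebraMap R (FractionRing R) d)⁻¹ • C₀))⁻¹ =
        C₀ * (1 - P₀ * C₀)⁻¹ * A.map (algebraMap R (FractionRing R)) +
          C₀ * (1 - P₀ * C₀)⁻¹ * P₀ * B.map (algebraMap R (FractionRing R)) := by
  have hδ : algebraMap R (FractionRing R) d ≠ 0 :=
    (map_ne_zero_iff _ (IsFractionRing.injective R (FractionRing R))).2 hd
  obtain rfl : P = algebraMap R (FractionRing R) d • P₀ := by
    rw [hP₀, smul_smul, mul_inv_cancel₀ hδ, one_smul]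
  have hclosed := inv_smul_mul_inv_one_sub_of_one_eq hδ P₀ C₀ h
  refine ⟨hstab.smul_inv_smul hd ?_, hclosed⟩
  obtain ⟨hdet, -, -, -, hX, hS'⟩ := hstab
  rw [hclosed, mul_inv_one_sub_mul_mul P₀ C₀ (isUnit_iff_ne_zero.2 hdet)]
  exact (hX.mul (.map A)).add ((hS'.sub .one).mul (.map B))
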